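/- arXiv:2403.05348 — 2 statements merged into one kernel-verified Lean document; each statement's English description precedes it below -/
import Mathlib

section
/- If φᵢ, ψᵢ : K → K' are simplicial maps with φᵢ ∼ ψᵢ (same contiguity class) for each i = 1,...,n, then SD(φ₁,...,φₙ) = SD(ψ₁,...,ψₙ). -/
/-- An abstract simplicial complex on vertex type `V`. -/
structure ASC (V : Type) where
  faces : Set (Finset V)
  nonempty_of_mem : ∀ {s : Finset V}, s ∈ faces → s.Nonempty
  down_closed : ∀ {s t : Finset V}, s ∈ faces → t ⊆ s → t.Nonempty → t ∈ faces

/-- A simplicial map between abstract simplicial complexes. -/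
structure SMap {V W : Type} [DecidableEq W] (K : ASC V) (L : ASC W) where
  toFun : V → W
  maps_faces : ∀ {s : Finset V}, s ∈ K.faces → s.image toFun ∈ L.faces

namespace SMap

variable {V W U : Type} [DecidableEq V] [DecidableEq W] [DecidableEq U]
  {K : ASC V} {L : ASC W} {M : ASC U}

/-- The identity simplicial map. -/
def id (K : ASC V) : SMap K K :=
  ⟨fun v => v, by intro s hs; simpa using hs⟩

/-- Composition of simplicial maps. -/
def comp (ψ : SMap L M) (φ : SMap K L) : SMap K M :=
  ⟨ψ.toFun ∘ φ.toFun, by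
    intro s hs
    have h := ψ.maps_faces (φ.maps_faces hs)
    simpa [Finset.image_image] using h⟩

end SMap

/-- Two simplicial maps are contiguous if the images of each simplex under the two
maps together span a simplex. -/
def Contiguous {V W : Type} [DecidableEq W] {K : ASC V} {L : ASC W}
    (φ ψ : SMap K L) : Prop :=
  ∀ {s : Finset V}, s ∈ K.faces → (s.image φ.toFun ∪ s.image ψ.toFun) ∈ L.faces

/-- Being in the same contiguity class: the reflexive-transitive closure of
contiguity (`φ ∼ ψ`). -/
def CClass {V W : Type} [DecidableEq W] {K : ASC V} {L : ASC W}
    (φ ψ : SMap K L) : Prop :=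
  Relation.ReflTransGen Contiguous φ ψ

/-- The type of subcomplexes of `K`. -/
def ASC.Sub {V : Type} (K : ASC V) : Type :=
  {Ω : ASC V // Ω.faces ⊆ K.faces}

/-- Restriction of a simplicial map to a subcomplex of the domain. -/
def SMap.restrict {V W : Type} [DecidableEq W] {K : ASC V} {L : ASC W}
    (φ : SMap K L) (Ω : K.Sub) : SMap Ω.1 L :=
  ⟨φ.toFun, by intro s hs; exact φ.maps_faces (Ω.2 hs)⟩

/-- `SDle φ k` : the family `φ` has contiguity distance at most `k`, witnessed by a
cover of `K` by `k+1` subcomplexes on each of which all the maps restrict into a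
single contiguity class. -/
def SDle {V W : Type} [DecidableEq W] {K : ASC V} {L : ASC W} {n : ℕ}
    (φ : Fin n → SMap K L) (k : ℕ) : Prop :=
  ∃ Ω : Fin (k + 1) → K.Sub,
    (∀ s ∈ K.faces, ∃ j, s ∈ (Ω j).1.faces) ∧
    ∀ j i i', CClass ((φ i).restrict (Ω j)) ((φ i').restrict (Ω j))

/-- The `n`-th contiguity distance `SD(φ₁,…,φₙ)`, valued in `ℕ∞`. -/
noncomputable def SD {V W : Type} [DecidableEq W] {K : ASC V} {L : ASC W} {n : ℕ}
    (φ : Fin n → SMap K L) : ℕ∞ :=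
  sInf {m : ℕ∞ | ∃ k : ℕ, m = (k : ℕ∞) ∧ SDle φ k}

/-- `v` is a vertex of `K`. -/
def ASC.isVertex {V : Type} (K : ASC V) (v : V) : Prop :=
  ({v} : Finset V) ∈ K.faces

/-- The constant simplicial map at a vertex `v` of `L`. -/
def constMap {V W : Type} [DecidableEq W] (K : ASC V) (L : ASC W) {v : W}
    (hv : L.isVertex v) : SMap K L :=
  ⟨fun _ => v, by
    intro s hs
    rw [Finset.image_const (K.nonempty_of_mem hs) v]
    exact hv⟩

/-- The inclusion of a subcomplex. -/
def incl {V : Type} [DecidableEq V] {K : ASC V} (Ω : K.Sub) : SMap Ω.1 K :=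
  ⟨fun x => x, by intro s hs; simpa using Ω.2 hs⟩

/-- A subcomplex is categorical if its inclusion is in the same contiguity class
as a constant map. -/
def Categorical {V : Type} [DecidableEq V] {K : ASC V} (Ω : K.Sub) : Prop :=
  ∃ v : V, ∃ hv : K.isVertex v, CClass (incl Ω) (constMap Ω.1 K hv)

/-- `scatle K k` : `K` is covered by `k+1` categorical subcomplexes. -/
def scatle {V : Type} [DecidableEq V] (K : ASC V) (k : ℕ) : Prop :=
  ∃ Ω : Fin (k + 1) → K.Sub,
    (∀ s ∈ K.faces, ∃ j, s ∈ (Ω j).1.faces) ∧ ∀ j, Categorical (Ω j)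

/-- The simplicial Lusternik–Schnirelmann category, valued in `ℕ∞`. -/
noncomputable def scat {V : Type} [DecidableEq V] (K : ASC V) : ℕ∞ :=
  sInf {m : ℕ∞ | ∃ k : ℕ, m = (k : ℕ∞) ∧ scatle K k}

/-- The `n`-fold categorical product `Kⁿ`. -/
def ASC.prodPow {V : Type} [DecidableEq V] (K : ASC V) (n : ℕ) : ASC (Fin n → V) where
  faces := {s | s.Nonempty ∧ ∀ i : Fin n, s.image (fun f => f i) ∈ K.faces}
  nonempty_of_mem := fun h => h.1
  down_closed := by
    intro s t hs hts ht
    refine ⟨ht, fun i => ?_⟩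
    exact K.down_closed (hs.2 i) (Finset.image_subset_image (f := fun f => f i) hts)
      (ht.image _)

/-- Projection to the `i`-th factor of the categorical product. -/
def proj {V : Type} [DecidableEq V] (K : ASC V) (n : ℕ) (i : Fin n) :
    SMap (K.prodPow n) K :=
  ⟨fun f => f i, by intro s hs; exact hs.2 i⟩

/-- The diagonal simplicial map `K → Kⁿ`. -/
def diag {V : Type} [DecidableEq V] (K : ASC V) (n : ℕ) : SMap K (K.prodPow n) :=
  ⟨fun v _ => v, by
    intro s hs
    refine ⟨(K.nonempty_of_mem hs).image _, fun i => ?_⟩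
    have h : (s.image fun v (_ : Fin n) => v).image (fun f => f i) = s := by
      rw [Finset.image_image]
      exact Finset.image_id'
    rw [h]; exact hs⟩

/-- A subcomplex `Ω ⊆ Kⁿ` is `n`-Farber if the diagonal admits a section over `Ω`
up to contiguity class. -/
def IsFarber {V : Type} [DecidableEq V] {K : ASC V} {n : ℕ}
    (Ω : (K.prodPow n).Sub) : Prop :=
  ∃ σ : SMap Ω.1 K, CClass ((diag K n).comp σ) (incl Ω)

/-- `dTCle K n k` : `Kⁿ` is covered by `k+1` `n`-Farber subcomplexes. -/
def dTCle {V : Type} [DecidableEq V] (K : ASC V) (n k : ℕ) : Prop :=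
  ∃ Ω : Fin (k + 1) → (K.prodPow n).Sub,
    (∀ s ∈ (K.prodPow n).faces, ∃ j, s ∈ (Ω j).1.faces) ∧ ∀ j, IsFarber (Ω j)

/-- The `n`-th discrete topological complexity, valued in `ℕ∞`. -/
noncomputable def dTC {V : Type} [DecidableEq V] (K : ASC V) (n : ℕ) : ℕ∞ :=
  sInf {m : ℕ∞ | ∃ k : ℕ, m = (k : ℕ∞) ∧ dTCle K n k}

/-- `K` is edge-path connected: any two vertices are joined by a finite edge path. -/
def ASC.EPConn {V : Type} [DecidableEq V] (K : ASC V) : Prop :=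
  ∀ u v : V, K.isVertex u → K.isVertex v →
    Relation.ReflTransGen (fun a b => ({a, b} : Finset V) ∈ K.faces) u v

/-- `K` is strongly collapsible: the identity is in the same contiguity class as a
constant map. -/
def StronglyCollapsible {V : Type} [DecidableEq V] (K : ASC V) : Prop :=
  ∃ v : V, ∃ hv : K.isVertex v, CClass (SMap.id K) (constMap K K hv)

/-- `μ` is a right strong equivalence: it has a right strong homotopy inverse. -/
def RightStrongEq {V W : Type} [DecidableEq V] [DecidableEq W]
    {K : ASC V} {L : ASC W} (μ : SMap K L) : Prop :=
  ∃ α : SMap L K, CClass (μ.comp α) (SMap.id L)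

/-- `μ` is a left strong equivalence: it has a left strong homotopy inverse. -/
def LeftStrongEq {V W : Type} [DecidableEq V] [DecidableEq W]
    {K : ASC V} {L : ASC W} (μ : SMap K L) : Prop :=
  ∃ β : SMap L K, CClass (β.comp μ) (SMap.id K)

/-- The barycentric subdivision of `K`: vertices are the simplices of `K`, and
simplices are chains of simplices of `K`. -/
def ASC.sd {V : Type} (K : ASC V) : ASC (Finset V) where
  faces := {S | S.Nonempty ∧ (∀ σ ∈ S, σ ∈ K.faces) ∧
    ∀ σ ∈ S, ∀ τ ∈ S, σ ⊆ τ ∨ τ ⊆ σ}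
  nonempty_of_mem := fun h => h.1
  down_closed := fun hS hTS hT =>
    ⟨hT, fun σ hσ => hS.2.1 σ (hTS hσ), fun σ hσ τ hτ => hS.2.2 σ (hTS hσ) τ (hTS hτ)⟩

/-- The induced simplicial map on barycentric subdivisions. -/
def SMap.sd {V W : Type} [DecidableEq V] [DecidableEq W] {K : ASC V} {L : ASC W}
    (φ : SMap K L) : SMap K.sd L.sd :=
  ⟨fun σ => σ.image φ.toFun, by
    intro S hS
    refine ⟨hS.1.image _, ?_, ?_⟩
    · intro τ hτ
      simp only [Finset.mem_image] at hτ
      obtain ⟨σ, hσ, rfl⟩ := hτ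
      exact φ.maps_faces (hS.2.1 σ hσ)
    · intro τ₁ h₁ τ₂ h₂
      simp only [Finset.mem_image] at h₁ h₂
      obtain ⟨σ₁, hσ₁, rfl⟩ := h₁
      obtain ⟨σ₂, hσ₂, rfl⟩ := h₂
      rcases hS.2.2 σ₁ hσ₁ σ₂ hσ₂ with h | h
      · exact Or.inl (Finset.image_subset_image h)
      · exact Or.inr (Finset.image_subset_image h)⟩


lemma Contiguous.symm' {V W : Type} [DecidableEq W] {K : ASC V} {L : ASC W}
    {φ ψ : SMap K L} (h : Contiguous φ ψ) : Contiguous ψ φ := by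
  intro s hs; rw [Finset.union_comm]; exact h hs

lemma CClass.symm' {V W : Type} [DecidableEq W] {K : ASC V} {L : ASC W}
    {φ ψ : SMap K L} (h : CClass φ ψ) : CClass ψ φ := by
  induction h with
  | refl => exact Relation.ReflTransGen.refl
  | @tail b c _ hc ih =>
      have h2 : Contiguous c b := hc.symm'
      exact (Relation.ReflTransGen.single (r := Contiguous) h2).trans ih

lemma CClass.restrict' {V W : Type} [DecidableEq W] {K : ASC V} {L : ASC W}
    {φ ψ : SMap K L} (h : CClass φ ψ) (Ω : K.Sub) :
    CClass (φ.restrict Ω) (ψ.restrict Ω) := by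
  induction h with
  | refl => exact Relation.ReflTransGen.refl
  | tail _ hc ih => exact ih.tail (fun {s} hs => hc (Ω.2 hs))

lemma SDle_congr {V W : Type} [DecidableEq W] {K : ASC V} {L : ASC W}
    {n : ℕ} {φ ψ : Fin n → SMap K L} (h : ∀ i, CClass (φ i) (ψ i)) {k : ℕ}
    (hk : SDle φ k) : SDle ψ k := by
  obtain ⟨Ω, hcov, hcc⟩ := hk
  refine ⟨Ω, hcov, fun j i i' => ?_⟩
  exact (((h i).restrict' (Ω j)).symm'.trans (hcc j i i')).trans
    ((h i').restrict' (Ω j))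

/-- `SD` only depends on the contiguity classes of the maps. -/
theorem SD_congr {V W : Type} [DecidableEq W] {K : ASC V} {L : ASC W}
    {n : ℕ} (φ ψ : Fin n → SMap K L) (h : ∀ i, CClass (φ i) (ψ i)) :
    SD φ = SD ψ := by
  unfold SD
  congr 1
  ext m
  constructor
  · rintro ⟨k, rfl, hk⟩; exact ⟨k, rfl, SDle_congr h hk⟩
  · rintro ⟨k, rfl, hk⟩; exact ⟨k, rfl, SDle_congr (fun i => (h i).symm') hk⟩
end

section
/- A subcomplex Ω ⊆ Kⁿ is n-Farber if and only if the restrictions of all n projections to Ω are pairwise in the same contiguity class: (pᵢ)|_Ω ∼ (pⱼ)|_Ω for all i, j ∈ {1,...,n}. -/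
/-!
A simplicial map into `Kⁿ` is the same thing as an `n`-tuple of simplicial maps into `K`, and
contiguity of two such maps is checked coordinatewise. Hence two tuples are in the same
contiguity class iff their coordinates are: one direction composes with the projections, the
other moves one coordinate at a time along its chain. Since `Δ ∘ σ` is the tuple `(σ, …, σ)`
and `ι_Ω` is the tuple of restricted projections, `Ω` is Farber iff some `σ` lies in the
contiguity class of every `(pᵢ)|_Ω`, i.e. iff these classes all coincide.
-/

section

variable {U V W : Type} [DecidableEq V] [DecidableEq W] {J : ASC U} {K : ASC V} {M : ASC W}

theorem SMap.ext {φ ψ : SMap J K} (h : φ.toFun = ψ.toFun) : φ = ψ := by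
  cases φ; cases ψ; congr

theorem Contiguous.refl (φ : SMap J K) : Contiguous φ φ := fun hs => by
  simpa only [Finset.union_self] using φ.maps_faces hs

theorem Contiguous.symm {φ ψ : SMap J K} (h : Contiguous φ ψ) : Contiguous ψ φ := fun hs => by
  simpa only [Finset.union_comm] using h hs

theorem CClass.symm {φ ψ : SMap J K} (h : CClass φ ψ) : CClass ψ φ :=
  Relation.ReflTransGen.mono (p := Contiguous) (fun _ _ hc => hc.symm) _ _
    (Relation.reflTransGen_swap.2 h)

theorem Contiguous.comp_left (μ : SMap K M) {φ ψ : SMap J K} (h : Contiguous φ ψ) :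
    Contiguous (μ.comp φ) (μ.comp ψ) := fun hs => by
  simpa only [SMap.comp, Finset.image_union, Finset.image_image] using μ.maps_faces (h hs)

theorem CClass.comp_left (μ : SMap K M) {φ ψ : SMap J K} (h : CClass φ ψ) :
    CClass (μ.comp φ) (μ.comp ψ) :=
  Relation.ReflTransGen.lift (SMap.comp μ) (fun _ _ hc => hc.comp_left μ) _ _ h

def SMap.pi {n : ℕ} (f : Fin n → SMap J K) : SMap J (K.prodPow n) :=
  ⟨fun x i => (f i).toFun x, fun hs => ⟨(J.nonempty_of_mem hs).image _, fun i => by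
    simpa only [Finset.image_image, Function.comp_def] using (f i).maps_faces hs⟩⟩

theorem proj_comp_pi {n : ℕ} (f : Fin n → SMap J K) (i : Fin n) :
    (proj K n i).comp (SMap.pi f) = f i :=
  SMap.ext rfl

theorem diag_comp_eq_pi {n : ℕ} (σ : SMap J K) : (diag K n).comp σ = SMap.pi fun _ => σ :=
  SMap.ext rfl

theorem incl_eq_pi {n : ℕ} (Ω : (K.prodPow n).Sub) :
    incl Ω = SMap.pi fun i => (proj K n i).restrict Ω :=
  SMap.ext rfl

theorem Contiguous.pi {n : ℕ} {f g : Fin n → SMap J K} (h : ∀ i, Contiguous (f i) (g i)) :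
    Contiguous (SMap.pi f) (SMap.pi g) := fun hs =>
  ⟨((J.nonempty_of_mem hs).image _).mono Finset.subset_union_left, fun i => by
    simpa only [SMap.pi, Finset.image_union, Finset.image_image, Function.comp_def]
      using h i hs⟩

theorem CClass.pi_update {n : ℕ} (f : Fin n → SMap J K) (i : Fin n) {a b : SMap J K}
    (h : CClass a b) :
    CClass (SMap.pi (Function.update f i a)) (SMap.pi (Function.update f i b)) :=
  Relation.ReflTransGen.lift (fun c => SMap.pi (Function.update f i c)) (fun c d hcd => by
    refine Contiguous.pi fun j => ?_
    rcases eq_or_ne j i with rfl | hj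
    · rw [Function.update_self, Function.update_self]; exact hcd
    · rw [Function.update_of_ne hj, Function.update_of_ne hj]; exact Contiguous.refl (f j))
    _ _ h

theorem CClass.pi {n : ℕ} {f g : Fin n → SMap J K} (h : ∀ i, CClass (f i) (g i)) :
    CClass (SMap.pi f) (SMap.pi g) := by
  suffices hS : ∀ S : Finset (Fin n),
      CClass (SMap.pi f) (SMap.pi fun i => if i ∈ S then g i else f i) by
    simpa only [Finset.mem_univ, if_true] using hS Finset.univ
  intro S
  induction S using Finset.induction_on with
  | empty =>
    simp only [Finset.notMem_empty, if_false]
    exact Relation.ReflTransGen.refl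
  | insert a S ha ih =>
    set F : Fin n → SMap J K := fun i => if i ∈ S then g i else f i
    have hF : Function.update F a (f a) = F := by
      rw [Function.update_eq_self_iff]; simp only [F, ha, if_false]
    have hF' : Function.update F a (g a) = fun i => if i ∈ insert a S then g i else f i := by
      funext j
      rcases eq_or_ne j a with rfl | hj
      · simp only [Function.update_self, Finset.mem_insert_self, if_true]
      · simp only [Function.update_of_ne hj, F, Finset.mem_insert, hj, false_or]
    have step := CClass.pi_update F a (h a)
    rw [hF, hF'] at step
    exact ih.trans step

theorem cclass_pi_iff {n : ℕ} {f g : Fin n → SMap J K} :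
    CClass (SMap.pi f) (SMap.pi g) ↔ ∀ i, CClass (f i) (g i) := by
  refine ⟨fun h i => ?_, CClass.pi⟩
  simpa only [proj_comp_pi] using h.comp_left (proj K n i)

theorem isFarber_iff_exists_cclass_proj {n : ℕ} (Ω : (K.prodPow n).Sub) :
    IsFarber Ω ↔ ∃ σ : SMap Ω.1 K, ∀ i, CClass σ ((proj K n i).restrict Ω) := by
  simp only [IsFarber, diag_comp_eq_pi, incl_eq_pi, cclass_pi_iff]

end

/-- `Ω ⊆ Kⁿ` is `n`-Farber iff all restricted projections are in
the same contiguity class. -/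
theorem isFarber_iff {V : Type} [DecidableEq V] {K : ASC V} {n : ℕ}
    (hn : 1 ≤ n) (Ω : (K.prodPow n).Sub) :
    IsFarber Ω ↔
      ∀ i j, CClass ((proj K n i).restrict Ω) ((proj K n j).restrict Ω) := by
  rw [isFarber_iff_exists_cclass_proj]
  constructor
  · rintro ⟨σ, hσ⟩ i j
    exact (hσ i).symm.trans (hσ j)
  · intro h
    exact ⟨_, h ⟨0, hn⟩⟩
end
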